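/- arXiv:0910.2582 — 4 statements merged into one kernel-verified Lean document; each statement's English description precedes it below -/
import Mathlib

section
/- Let P ≥ 1 be a positive integer, let s : Fin P → Fin P → ℕ, fix an index i, let S_i := Σ_{j} s(i,j), and assume Σ_{j} s(j,i) = S_i (PE i sends and receives S_i elements in total). Let A_i be a natural number with A_i > P, and let k be a positive integer with (k : ℝ) ≥ S_i / (A_i − P). Then for every round r with 1 ≤ r ≤ k, the number of elements received by PE i in the first r rounds exceeds the number of elements sent by PE i in the first r−1 rounds by at most A_i; formally, Σ_{j=1}^{P} ⌈r·s(j,i)/k⌉ − Σ_{j=1}^{P} ⌈(r−1)·s(i,j)/k⌉ ≤ A_i (ceilings taken of the rational quotients). -/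
/-!
By the end of round `r`, PE `i` has received at most `∑ⱼ (r s(j,i)/k + 1) = r S/k + P` elements,
since each ceiling adds less than one, and it has already sent at least `(r-1) S/k` of them,
since each ceiling only rounds up. Its buffer therefore holds at most `S/k + P` elements,
and `k ≥ S/(A - P)` is exactly the condition `S/k + P ≤ A`.
-/

open Finset

theorem Finset.sum_ceil_le_sum_add_card {ι α : Type*} [Ring α] [LinearOrder α]
    [IsStrictOrderedRing α] [FloorRing α] (s : Finset ι) (f : ι → α) :
    ((∑ i ∈ s, ⌈f i⌉ : ℤ) : α) ≤ ∑ i ∈ s, f i + #s := by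
  push_cast
  calc ∑ i ∈ s, (⌈f i⌉ : α) ≤ ∑ i ∈ s, (f i + 1) :=
        sum_le_sum fun i _ ↦ (Int.ceil_lt_add_one (f i)).le
    _ = ∑ i ∈ s, f i + #s := by rw [sum_add_distrib, sum_const, nsmul_one]

theorem Finset.sum_le_sum_ceil {ι α : Type*} [Ring α] [LinearOrder α]
    [IsStrictOrderedRing α] [FloorRing α] (s : Finset ι) (f : ι → α) :
    ∑ i ∈ s, f i ≤ ((∑ i ∈ s, ⌈f i⌉ : ℤ) : α) := by
  push_cast
  exact sum_le_sum fun i _ ↦ Int.le_ceil (f i)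

theorem sum_ceil_recv_sub_sum_ceil_sent_le {ι : Type*} (s : Finset ι) (recv sent : ι → ℕ)
    {S : ℕ} (hrecv : ∑ j ∈ s, recv j = S) (hsent : ∑ j ∈ s, sent j = S) (r k : ℕ) :
    (((∑ j ∈ s, ⌈((r * recv j : ℕ) : ℚ) / k⌉)
      - (∑ j ∈ s, ⌈(((r - 1) * sent j : ℕ) : ℚ) / k⌉) : ℤ) : ℚ) ≤ S / k + #s := by
  have hreceived := s.sum_ceil_le_sum_add_card fun j ↦ ((r * recv j : ℕ) : ℚ) / k
  have hsentLower := s.sum_le_sum_ceil fun j ↦ (((r - 1) * sent j : ℕ) : ℚ) / k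
  simp only [← sum_div, ← Nat.cast_sum, ← mul_sum, hrecv, hsent] at hreceived hsentLower
  -- truncation at `r = 0` only makes `r - 1` larger, which is harmless for a lower bound on sends
  have hr : (r : ℚ) ≤ (r - 1 : ℕ) + 1 := by exact_mod_cast (by omega : r ≤ r - 1 + 1)
  have hSk : 0 ≤ (S : ℚ) / k := by positivity
  push_cast at hreceived hsentLower ⊢
  rw [mul_div_assoc] at hreceived hsentLower
  linarith [mul_le_mul_of_nonneg_right hr hSk]

theorem div_add_le_of_div_sub_le {S P A k : ℕ} (hA : P < A)
    (hkS : (k : ℝ) ≥ (S : ℝ) / ((A : ℝ) - (P : ℝ))) : (S : ℚ) / k + P ≤ A := by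
  have hPA : (P : ℚ) < A := by exact_mod_cast hA
  have hSk : (S : ℚ) ≤ (A - P) * k := by
    rw [mul_comm]
    exact_mod_cast (div_le_iff₀ (sub_pos.2 (by exact_mod_cast hA : (P : ℝ) < A))).1 hkS
  linarith [div_le_of_le_mul₀ (Nat.cast_nonneg k) (by linarith) hSk]

theorem equalRounds_buffer_bound_general
    (P : ℕ) (s : Fin P → Fin P → ℕ) (i : Fin P)
    (S : ℕ) (hS : S = ∑ j, s i j) (hrecv : ∑ j, s j i = S)
    (A : ℕ) (hA : P < A)
    (k : ℕ) (hkS : (k : ℝ) ≥ (S : ℝ) / ((A : ℝ) - (P : ℝ)))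
    (r : ℕ) :
    (∑ j, ⌈((r * s j i : ℕ) : ℚ) / (k : ℚ)⌉)
      - (∑ j, ⌈(((r - 1) * s i j : ℕ) : ℚ) / (k : ℚ)⌉) ≤ (A : ℤ) := by
  have hbuffer := sum_ceil_recv_sub_sum_ceil_sent_le univ (fun j ↦ s j i) (s i) hrecv hS.symm r k
  rw [card_univ, Fintype.card_fin] at hbuffer
  exact_mod_cast hbuffer.trans (div_add_le_of_div_sub_le hA hkS)

/-- Algorithm `EqualRounds` for the in-place all-to-all operation:
if `k ≥ S_i / (A_i - P)` (with `A_i > P` buffer blocks on PE `i`), then in every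
round `1 ≤ r ≤ k`, the number of elements received by PE `i` in the first `r`
rounds exceeds the number of elements sent by PE `i` in the first `r - 1`
rounds by at most `A_i`. -/
theorem equalRounds_buffer_bound
    (P : ℕ) (hP : 1 ≤ P) (s : Fin P → Fin P → ℕ) (i : Fin P)
    (S : ℕ) (hS : S = ∑ j, s i j) (hrecv : ∑ j, s j i = S)
    (A : ℕ) (hA : P < A)
    (k : ℕ) (hk : 1 ≤ k) (hkS : (k : ℝ) ≥ (S : ℝ) / ((A : ℝ) - (P : ℝ)))
    (r : ℕ) (hr1 : 1 ≤ r) (hrk : r ≤ k) :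
    (∑ j, ⌈((r * s j i : ℕ) : ℚ) / (k : ℚ)⌉)
      - (∑ j, ⌈(((r - 1) * s i j : ℕ) : ℚ) / (k : ℚ)⌉) ≤ (A : ℤ) :=
  equalRounds_buffer_bound_general P s i S hS hrecv A hA k hkS r
end

section
/- Let P ≥ 1 and k ≥ 1 be positive integers, let s : Fin P → Fin P → ℕ, fix an index i, and let S_i := Σ_j s(i,j). Then for every round r with 1 ≤ r ≤ k, the number of elements PE i sends in round r is at most S_i/k + P; formally, Σ_{j=1}^{P} ( ⌈r·s(i,j)/k⌉ − ⌈(r−1)·s(i,j)/k⌉ ) ≤ S_i/k + P, where the inequality is between real numbers and the ceilings are of rational quotients. -/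
/-!
Rounding up can add at most one element per destination: since `r·s ≤ (r-1)·s + s` and the
ceiling is monotone and subadditive, the `j`-th increment `⌈r·s/k⌉ - ⌈(r-1)·s/k⌉` is at most
`⌈s/k⌉ < s/k + 1`. Summing over the `P` destinations gives `S/k + P`.
-/

open Finset

theorem Int.ceil_sub_ceil_lt_add_one_of_le {R : Type*} [Ring R] [LinearOrder R]
    [IsOrderedRing R] [FloorRing R] {a b c : R} (h : a ≤ b + c) :
    ((⌈a⌉ - ⌈b⌉ : ℤ) : R) < c + 1 := by
  have hceil : ⌈a⌉ - ⌈b⌉ ≤ ⌈c⌉ := by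
    linarith [Int.ceil_mono h, Int.ceil_add_le b c]
  calc ((⌈a⌉ - ⌈b⌉ : ℤ) : R) ≤ ⌈c⌉ := by exact_mod_cast hceil
    _ < c + 1 := Int.ceil_lt_add_one c

theorem Nat.mul_le_sub_one_mul_add (r n : ℕ) : r * n ≤ (r - 1) * n + n := by
  rw [← Nat.succ_mul]
  exact Nat.mul_le_mul_right n (Nat.le_succ_of_pred_le le_rfl)

theorem ceil_round_increment_lt (r n k : ℕ) :
    ((⌈((r * n : ℕ) : ℚ) / k⌉ - ⌈(((r - 1) * n : ℕ) : ℚ) / k⌉ : ℤ) : ℚ) < (n : ℚ) / k + 1 := by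
  refine Int.ceil_sub_ceil_lt_add_one_of_le ?_
  rw [← add_div]
  gcongr
  exact_mod_cast Nat.mul_le_sub_one_mul_add r n

theorem equalRounds_round_send_bound_general
    (P : ℕ) (k : ℕ)
    (s : Fin P → Fin P → ℕ) (i : Fin P)
    (S : ℕ) (hS : S = ∑ j, s i j)
    (r : ℕ) :
    ((∑ j, (⌈((r * s i j : ℕ) : ℚ) / (k : ℚ)⌉
        - ⌈(((r - 1) * s i j : ℕ) : ℚ) / (k : ℚ)⌉) : ℤ) : ℝ)
      ≤ (S : ℝ) / (k : ℝ) + (P : ℝ) := by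
  calc _ = ∑ j, ((⌈((r * s i j : ℕ) : ℚ) / k⌉ - ⌈(((r - 1) * s i j : ℕ) : ℚ) / k⌉ : ℤ) : ℝ) :=
        Int.cast_sum _ _
    _ ≤ ∑ j, ((s i j : ℝ) / k + 1) := sum_le_sum fun j _ => by
        simpa using (Rat.cast_le (K := ℝ)).mpr (ceil_round_increment_lt r (s i j) k).le
    _ = (S : ℝ) / k + P := by simp [sum_add_distrib, ← sum_div, hS]

/-- Algorithm `EqualRounds`: in every round `1 ≤ r ≤ k`, the number of elements
sent by PE `i` (namely `∑_j (⌈r·s(i,j)/k⌉ - ⌈(r-1)·s(i,j)/k⌉)`) is at most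
`S_i / k + P`, as real numbers. -/
theorem equalRounds_round_send_bound
    (P : ℕ) (hP : 1 ≤ P) (k : ℕ) (hk : 1 ≤ k)
    (s : Fin P → Fin P → ℕ) (i : Fin P)
    (S : ℕ) (hS : S = ∑ j, s i j)
    (r : ℕ) (hr1 : 1 ≤ r) (hrk : r ≤ k) :
    ((∑ j, (⌈((r * s i j : ℕ) : ℚ) / (k : ℚ)⌉
        - ⌈(((r - 1) * s i j : ℕ) : ℚ) / (k : ℚ)⌉) : ℤ) : ℝ)
      ≤ (S : ℝ) / (k : ℝ) + (P : ℝ) :=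
  equalRounds_round_send_bound_general P k s i S hS r
end

section
/- Let P ≥ 1 and k ≥ 1 be positive integers, let s : Fin P → Fin P → ℕ, fix an index i, let S_i := Σ_j s(i,j) and assume Σ_j s(j,i) = S_i. For each round r (1 ≤ r ≤ k) define sent_i(r) := Σ_j ( ⌈r·s(i,j)/k⌉ − ⌈(r−1)·s(i,j)/k⌉ ) and recv_i(r) := Σ_j ( ⌈r·s(j,i)/k⌉ − ⌈(r−1)·s(j,i)/k⌉ ). Then the total communication cost of PE i over all k rounds satisfies Σ_{r=1}^{k} max(sent_i(r), recv_i(r)) ≤ S_i + k·P. -/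
/-!
In round `r` PE `i` moves `⌈r t/k⌉ - ⌈(r-1) t/k⌉ ≤ ⌈t/k⌉` elements of a message of length `t`
(subadditivity of the ceiling), so every round, whether counted by sent or by received elements,
costs at most `∑ⱼ ⌈tⱼ/k⌉`, and `k ⌈t/k⌉ ≤ t + k`. Summing over the `k` rounds and the `P`
partners gives `S + kP`.
-/

open Finset

section Ceil

variable {α : Type*} [Field α] [LinearOrder α] [IsStrictOrderedRing α] [FloorRing α]

theorem ceil_mul_div_sub_ceil_pred_mul_div_le {r : ℕ} (hr : 1 ≤ r) (t k : ℕ) :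
    ⌈((r * t : ℕ) : α) / k⌉ - ⌈(((r - 1) * t : ℕ) : α) / k⌉ ≤ ⌈(t : α) / k⌉ := by
  have hsplit : ((r * t : ℕ) : α) / k = (((r - 1) * t : ℕ) : α) / k + (t : α) / k := by
    obtain ⟨q, rfl⟩ := Nat.exists_eq_add_of_le' hr
    push_cast
    ring
  have := Int.ceil_add_le ((((r - 1) * t : ℕ) : α) / k) ((t : α) / k)
  rw [hsplit]
  omega

theorem natCast_mul_ceil_div_le (t k : ℕ) : (k : ℤ) * ⌈(t : α) / k⌉ ≤ t + k := by
  rcases Nat.eq_zero_or_pos k with rfl | hk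
  · simp
  have hk' : (0 : α) < k := by exact_mod_cast hk
  have : (k : α) * ⌈(t : α) / k⌉ < t + k := by
    calc (k : α) * ⌈(t : α) / k⌉ < k * ((t : α) / k + 1) :=
          mul_lt_mul_of_pos_left (Int.ceil_lt_add_one _) hk'
      _ = t + k := by field_simp
  exact_mod_cast this.le

end Ceil

section Rounds

variable {ι : Type*} [Fintype ι]

/-- The number of elements moved in round `r` of `EqualRounds` when `t j` elements are to be
exchanged with partner `j`. -/
def roundVolume (k r : ℕ) (t : ι → ℕ) : ℤ :=
  ∑ j, (⌈((r * t j : ℕ) : ℚ) / (k : ℚ)⌉ - ⌈(((r - 1) * t j : ℕ) : ℚ) / (k : ℚ)⌉)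

theorem roundVolume_le_sum_ceil {k r : ℕ} (hr : 1 ≤ r) (t : ι → ℕ) :
    roundVolume k r t ≤ ∑ j, ⌈(t j : ℚ) / k⌉ :=
  sum_le_sum fun j _ => ceil_mul_div_sub_ceil_pred_mul_div_le hr (t j) k

theorem natCast_mul_sum_ceil_div_le (k : ℕ) (t : ι → ℕ) :
    (k : ℤ) * ∑ j, ⌈(t j : ℚ) / k⌉ ≤ ∑ j, t j + k * Fintype.card ι := by
  calc (k : ℤ) * ∑ j, ⌈(t j : ℚ) / k⌉ ≤ ∑ j, ((t j : ℤ) + k) := by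
        rw [mul_sum]
        exact sum_le_sum fun j _ => natCast_mul_ceil_div_le (t j) k
    _ = ∑ j, t j + k * Fintype.card ι := by
        simp [sum_add_distrib, mul_comm]

theorem sum_max_roundVolume_le (k : ℕ) (t u : ι → ℕ) {S : ℕ}
    (ht : ∑ j, t j = S) (hu : ∑ j, u j = S) :
    ∑ r ∈ Icc 1 k, max (roundVolume k r t) (roundVolume k r u)
      ≤ (S : ℤ) + k * Fintype.card ι := by
  set M := max (∑ j, ⌈(t j : ℚ) / k⌉) (∑ j, ⌈(u j : ℚ) / k⌉)
  have hround : ∀ r ∈ Icc 1 k, max (roundVolume k r t) (roundVolume k r u) ≤ M :=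
    fun r hr => max_le_max (roundVolume_le_sum_ceil (mem_Icc.1 hr).1 t)
      (roundVolume_le_sum_ceil (mem_Icc.1 hr).1 u)
  have hM : (k : ℤ) * M ≤ S + k * Fintype.card ι := by
    rw [mul_max_of_nonneg _ _ (Nat.cast_nonneg k)]
    refine max_le ?_ ?_
    · simpa [← ht] using natCast_mul_sum_ceil_div_le k t
    · simpa [← hu] using natCast_mul_sum_ceil_div_le k u
  calc ∑ r ∈ Icc 1 k, max (roundVolume k r t) (roundVolume k r u)
      ≤ (Icc 1 k).card • M := sum_le_card_nsmul _ _ _ hround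
    _ = (k : ℤ) * M := by simp
    _ ≤ S + k * Fintype.card ι := hM

end Rounds

theorem equalRounds_total_cost_bound_general
    (P : ℕ) (k : ℕ)
    (s : Fin P → Fin P → ℕ) (i : Fin P)
    (S : ℕ) (hS : S = ∑ j, s i j) (hrecv : ∑ j, s j i = S) :
    ∑ r ∈ Finset.Icc 1 k,
      max
        (∑ j, (⌈((r * s i j : ℕ) : ℚ) / (k : ℚ)⌉
          - ⌈(((r - 1) * s i j : ℕ) : ℚ) / (k : ℚ)⌉))
        (∑ j, (⌈((r * s j i : ℕ) : ℚ) / (k : ℚ)⌉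
          - ⌈(((r - 1) * s j i : ℕ) : ℚ) / (k : ℚ)⌉))
      ≤ (S : ℤ) + (k : ℤ) * (P : ℤ) := by
  have h := sum_max_roundVolume_le k (s i) (fun j => s j i) hS.symm hrecv
  rwa [Fintype.card_fin] at h

/-- Algorithm `EqualRounds`: the total communication cost of PE `i` over all `k`
rounds (the cost of a round being the maximum of the number of elements sent and
received in that round) is at most `S_i + k·P`. -/
theorem equalRounds_total_cost_bound
    (P : ℕ) (hP : 1 ≤ P) (k : ℕ) (hk : 1 ≤ k)
    (s : Fin P → Fin P → ℕ) (i : Fin P)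
    (S : ℕ) (hS : S = ∑ j, s i j) (hrecv : ∑ j, s j i = S) :
    ∑ r ∈ Finset.Icc 1 k,
      max
        (∑ j, (⌈((r * s i j : ℕ) : ℚ) / (k : ℚ)⌉
          - ⌈(((r - 1) * s i j : ℕ) : ℚ) / (k : ℚ)⌉))
        (∑ j, (⌈((r * s j i : ℕ) : ℚ) / (k : ℚ)⌉
          - ⌈(((r - 1) * s j i : ℕ) : ℚ) / (k : ℚ)⌉))
      ≤ (S : ℤ) + (k : ℤ) * (P : ℤ) :=
  equalRounds_total_cost_bound_general P k s i S hS hrecv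
end

section
/- Throw n balls independently and uniformly at random into n bins (n a positive integer). Then for every natural number k with 1 ≤ k ≤ n, the probability that some bin receives at least k balls satisfies ℙ( max_{1 ≤ b ≤ n} (load of bin b) ≥ k ) ≤ n/k!. -/
/-! If some bin receives at least `k` balls, then some `k`-set of balls lands entirely in one
bin. For a fixed bin and a fixed `k`-set this happens with probability `n⁻ᵏ`, so the union bound
over the `n` bins and the `choose n k ≤ nᵏ / k!` sets gives `n / k!`. -/

open Finset Fintype

namespace BallsIntoBins

variable {α β : Type*} [Fintype α] [Fintype β] [DecidableEq β]

def load (ω : α → β) (b : β) : ℕ := #{a | ω a = b}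

theorem le_sup_load_iff [Nonempty β] {k : ℕ} {ω : α → β} :
    k ≤ univ.sup (load ω) ↔ ∃ b, k ≤ load ω b := by
  simp [← sup'_eq_sup univ_nonempty, le_sup'_iff]

variable [DecidableEq α]

theorem card_filter_forall_mem_eq_mul_pow (S : Finset α) (b : β) :
    #{ω : α → β | ∀ a ∈ S, ω a = b} * card β ^ #S = card β ^ card α := by
  have hpi : ({ω : α → β | ∀ a ∈ S, ω a = b} : Finset (α → β)) =
      piFinset fun a => if a ∈ S then {b} else univ := by
    ext ω
    simp only [mem_filter, mem_univ, true_and, mem_piFinset]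
    refine forall_congr' fun a => ?_
    split_ifs <;> simp [*]
  rw [hpi, card_piFinset]
  simp only [apply_ite card, card_singleton, card_univ, prod_ite, prod_const_one, one_mul,
    prod_const, ← pow_add]
  rw [filter_notMem_eq_sdiff, card_univ_sdiff, Nat.sub_add_cancel (card_le_univ S)]

theorem filter_exists_load_ge_subset (k : ℕ) :
    ({ω : α → β | ∃ b, k ≤ load ω b} : Finset (α → β)) ⊆
      univ.biUnion fun b => (powersetCard k univ).biUnion fun S => {ω | ∀ a ∈ S, ω a = b} := by
  intro ω hω
  obtain ⟨b, hb⟩ := (mem_filter.mp hω).2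
  obtain ⟨S, hS, rfl⟩ := exists_subset_card_eq hb
  simp only [mem_biUnion, mem_univ, mem_powersetCard, mem_filter, true_and]
  exact ⟨b, S, ⟨subset_univ S, rfl⟩, fun a ha => (mem_filter.mp (hS ha)).2⟩

theorem card_filter_exists_load_ge_mul_pow_le (k : ℕ) :
    #{ω : α → β | ∃ b, k ≤ load ω b} * card β ^ k ≤
      card β * (card α).choose k * card β ^ card α :=
  calc #{ω : α → β | ∃ b, k ≤ load ω b} * card β ^ k
      ≤ (∑ b : β, ∑ S ∈ powersetCard k univ, #{ω : α → β | ∀ a ∈ S, ω a = b}) * card β ^ k := by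
        gcongr
        exact (card_le_card (filter_exists_load_ge_subset k)).trans <|
          card_biUnion_le.trans <| sum_le_sum fun _ _ => card_biUnion_le
    _ = ∑ b : β, ∑ S ∈ powersetCard k (univ : Finset α), card β ^ card α := by
        rw [sum_mul]
        refine sum_congr rfl fun b _ => ?_
        rw [sum_mul]
        refine sum_congr rfl fun S hS => ?_
        rw [← (mem_powersetCard.mp hS).2, card_filter_forall_mem_eq_mul_pow]
    _ = card β * (card α).choose k * card β ^ card α := by
        simp [card_powersetCard, mul_assoc]

end BallsIntoBins

theorem PMF.toReal_toMeasure_uniformOfFintype_setOf {Ω : Type*} [Fintype Ω] [Nonempty Ω]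
    [MeasurableSpace Ω] [MeasurableSingletonClass Ω] (p : Ω → Prop) [DecidablePred p] :
    ((uniformOfFintype Ω).toMeasure {ω | p ω}).toReal = #{ω | p ω} / card Ω := by
  rw [toMeasure_uniformOfFintype_apply _ (Set.toFinite _).measurableSet, ENNReal.toReal_div,
    ENNReal.toReal_natCast, ENNReal.toReal_natCast, Fintype.card_subtype]
  rfl

open BallsIntoBins in
theorem balls_into_bins_max_load_tail_general
    (n : ℕ) [NeZero n] (k : ℕ) :
    (((PMF.uniformOfFintype (Fin n → Fin n)).toMeasure
        {ω : Fin n → Fin n |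
          k ≤ Finset.univ.sup
                (fun b : Fin n => (Finset.univ.filter (fun a => ω a = b)).card)}).toReal)
      ≤ (n : ℝ) / (k.factorial : ℝ) := by
  have hn : 0 < n := NeZero.pos n
  have hcount := card_filter_exists_load_ge_mul_pow_le (α := Fin n) (β := Fin n) k
  rw [Fintype.card_fin] at hcount
  change ((PMF.uniformOfFintype _).toMeasure {ω | k ≤ univ.sup (load ω)}).toReal ≤ _
  simp only [le_sup_load_iff]
  rw [PMF.toReal_toMeasure_uniformOfFintype_setOf, Fintype.card_fun, Fintype.card_fin]
  calc (#{ω : Fin n → Fin n | ∃ b, k ≤ load ω b} : ℝ) / ↑(n ^ n)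
      ≤ n * n.choose k / n ^ k := by
        rw [div_le_div_iff₀ (mod_cast pow_pos hn n) (by positivity)]
        norm_cast
        convert hcount -- the two sides differ only in their `Fintype`/`Decidable` instances
    _ ≤ n * (n ^ k / k.factorial) / n ^ k := by gcongr; exact Nat.choose_le_pow_div k n
    _ = n / k.factorial := by field_simp

/-- Balls into bins: if `n` balls are thrown independently and uniformly at
random into `n` bins (a uniformly random function `Fin n → Fin n`), then for
`1 ≤ k ≤ n` the probability that some bin receives at least `k` balls is at
most `n / k!`. -/
theorem balls_into_bins_max_load_tail
    (n : ℕ) [NeZero n] (k : ℕ) (hk1 : 1 ≤ k) (hkn : k ≤ n) :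
    (((PMF.uniformOfFintype (Fin n → Fin n)).toMeasure
        {ω : Fin n → Fin n |
          k ≤ Finset.univ.sup
                (fun b : Fin n => (Finset.univ.filter (fun a => ω a = b)).card)}).toReal)
      ≤ (n : ℝ) / (k.factorial : ℝ) :=
  balls_into_bins_max_load_tail_general n k
end
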